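/- arXiv:math/0201209 — 10 statements merged into one kernel-verified Lean document; each statement's English description precedes it below -/
import Mathlib

section
/- Let G ⊆ ℝ̄ⁿ be a domain whose boundary ∂G (in ℝ̄ⁿ) contains at least two points. Then for all x, y ∈ G, δ_G(x,y) ≤ ρ_G(x,y). -/
open OnePoint

noncomputable section

/-- Inverse hyperbolic cosine: arcosh t = log (t + √(t² − 1)). -/
def arcosh (t : ℝ) : ℝ := Real.log (t + Real.sqrt (t ^ 2 - 1))

/-- Euclidean n-space. -/
abbrev En (n : ℕ) : Type := EuclideanSpace ℝ (Fin n)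

/-- The chordal (spherical) metric on the one-point compactification ℝ̄ⁿ of ℝⁿ. -/
def chordal {n : ℕ} : OnePoint (En n) → OnePoint (En n) → ℝ
  | ∞, ∞ => 0
  | ∞, (y : En n) => 1 / Real.sqrt (1 + ‖y‖ ^ 2)
  | (x : En n), ∞ => 1 / Real.sqrt (1 + ‖x‖ ^ 2)
  | (x : En n), (y : En n) => ‖x - y‖ / (Real.sqrt (1 + ‖x‖ ^ 2) * Real.sqrt (1 + ‖y‖ ^ 2))

/-- The cross-ratio |a,b,c,d| = q(a,c)q(b,d)/(q(a,b)q(c,d)) in the chordal metric. -/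
def crossRatio {n : ℕ} (a b c d : OnePoint (En n)) : ℝ :=
  chordal a c * chordal b d / (chordal a b * chordal c d)

/-- The generalized hyperbolic metric ρ_G(x,y) = sup_{a,b ∈ ∂G} arcosh(1 + |a,x,b,y||a,y,b,x|/2). -/
def rho {n : ℕ} (G : Set (OnePoint (En n))) (x y : OnePoint (En n)) : ℝ :=
  sSup {r : ℝ | ∃ a ∈ frontier G, ∃ b ∈ frontier G,
    r = arcosh (1 + crossRatio a x b y * crossRatio a y b x / 2)}

/-- Seittenranta's metric δ_G(x,y) = sup_{a,b ∈ ∂G} log(1 + |a,x,b,y|). -/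
def seittenranta {n : ℕ} (G : Set (OnePoint (En n))) (x y : OnePoint (En n)) : ℝ :=
  sSup {r : ℝ | ∃ a ∈ frontier G, ∃ b ∈ frontier G,
    r = Real.log (1 + crossRatio a x b y)}

/-- The j-metric j_G(x,y) = log(1 + |x−y|/min(d(x,∂G), d(y,∂G))). -/
def jMetric {n : ℕ} (G : Set (En n)) (x y : En n) : ℝ :=
  Real.log (1 + ‖x - y‖ / min (Metric.infDist x (frontier G)) (Metric.infDist y (frontier G)))

/-- The metric δ_G^p(x,y) = sup_{a,b ∈ ∂G} log(1 + (|x,a,y,b|^p + |x,b,y,a|^p)^(1/p)). -/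
def deltaP {n : ℕ} (p : ℝ) (G : Set (OnePoint (En n))) (x y : OnePoint (En n)) : ℝ :=
  sSup {r : ℝ | ∃ a ∈ frontier G, ∃ b ∈ frontier G,
    r = Real.log (1 + (crossRatio x a y b ^ p + crossRatio x b y a ^ p) ^ (1 / p))}

/-- The metric j_G^p(x,y) = sup_{a ∈ ∂G} log(1 + (|x−y|^p/|x−a|^p + |x−y|^p/|y−a|^p)^(1/p)). -/
def jP {n : ℕ} (p : ℝ) (G : Set (En n)) (x y : En n) : ℝ :=
  sSup {r : ℝ | ∃ a ∈ frontier G,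
    r = Real.log (1 + (‖x - y‖ ^ p / ‖x - a‖ ^ p + ‖x - y‖ ^ p / ‖y - a‖ ^ p) ^ (1 / p))}

/-!
Inverse stereographic projection `σ` maps `ℝ̄ⁿ` onto the unit sphere of `ℝⁿ × ℝ` with
`q u v = |σ u - σ v| / 2`, so the chordal metric inherits Ptolemy's inequality from Euclidean
space. For boundary points `a, b` Ptolemy gives `s / (1 + s) ≤ t` for `s = |a,x,b,y|` and
`t = |a,y,b,x|`, and since `arcosh (1 + s² / (2 (1 + s))) = log (1 + s)`, every term of the
supremum defining `δ_G` is bounded by the corresponding term for `ρ_G`. Passing to the suprema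
needs the terms for `ρ_G` to be bounded above (`sSup` of an unbounded set of reals is `0`): `∂G` is
compact and misses `x` and `y`, so `q(a, x)` and `q(a, y)` are bounded below on `∂G`.
-/

section InvStereographic

variable {E : Type*} [NormedAddCommGroup E] [InnerProductSpace ℝ E]

def invStereographic : OnePoint E → WithLp 2 (E × ℝ)
  | ∞ => WithLp.toLp 2 (0, 1)
  | (x : E) => WithLp.toLp 2 ((2 / (1 + ‖x‖ ^ 2)) • x, (‖x‖ ^ 2 - 1) / (1 + ‖x‖ ^ 2))

lemma norm_invStereographic (u : OnePoint E) : ‖invStereographic u‖ = 1 := by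
  rw [← sq_eq_sq₀ (norm_nonneg _) zero_le_one, WithLp.prod_norm_sq_eq_of_L2]
  induction u using OnePoint.rec with
  | infty => simp [invStereographic]
  | coe x =>
    simp only [invStereographic, WithLp.toLp_fst, WithLp.toLp_snd, norm_smul, Real.norm_eq_abs,
      sq_abs, mul_pow, div_pow]
    field_simp
    ring

lemma dist_invStereographic_coe_coe (x y : E) :
    dist (invStereographic (x : OnePoint E)) (invStereographic (y : OnePoint E)) =
      2 * ‖x - y‖ / (√(1 + ‖x‖ ^ 2) * √(1 + ‖y‖ ^ 2)) := by
  have hx : (0:ℝ) < 1 + ‖x‖ ^ 2 := by positivity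
  have hy : (0:ℝ) < 1 + ‖y‖ ^ 2 := by positivity
  rw [← sq_eq_sq₀ dist_nonneg (by positivity), dist_eq_norm, WithLp.prod_norm_sq_eq_of_L2]
  simp only [invStereographic, WithLp.sub_fst, WithLp.sub_snd, WithLp.toLp_fst, WithLp.toLp_snd,
    norm_sub_sq_real, norm_smul, real_inner_smul_left, real_inner_smul_right, Real.norm_eq_abs,
    sq_abs, mul_pow, div_pow, Real.sq_sqrt hx.le, Real.sq_sqrt hy.le]
  field_simp
  ring

lemma dist_invStereographic_coe_infty (x : E) :
    dist (invStereographic (x : OnePoint E)) (invStereographic ∞) = 2 / √(1 + ‖x‖ ^ 2) := by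
  have hx : (0:ℝ) < 1 + ‖x‖ ^ 2 := by positivity
  rw [← sq_eq_sq₀ dist_nonneg (by positivity), dist_eq_norm, WithLp.prod_norm_sq_eq_of_L2]
  simp only [invStereographic, WithLp.sub_fst, WithLp.sub_snd, WithLp.toLp_fst, WithLp.toLp_snd,
    sub_zero, norm_smul, Real.norm_eq_abs, sq_abs, mul_pow, div_pow, Real.sq_sqrt hx.le]
  field_simp
  ring

lemma continuous_invStereographic [ProperSpace E] : Continuous (invStereographic (E := E)) := by
  rw [OnePoint.continuous_iff, Filter.coclosedCompact_eq_cocompact]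
  refine ⟨?_, WithLp.prod_continuous_toLp 2 E ℝ |>.comp (by fun_prop (disch := intro; positivity))⟩
  rw [tendsto_iff_dist_tendsto_zero]
  simp only [dist_invStereographic_coe_infty]
  refine tendsto_const_nhds.div_atTop (Real.tendsto_sqrt_atTop.comp ?_)
  exact Filter.tendsto_atTop_add_const_left _ 1
    ((Filter.tendsto_pow_atTop two_ne_zero).comp tendsto_norm_cocompact_atTop)

end InvStereographic

section Chordal

variable {n : ℕ}

lemma chordal_eq_half_dist (u v : OnePoint (En n)) :
    chordal u v = dist (invStereographic u) (invStereographic v) / 2 := by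
  induction u using OnePoint.rec <;> induction v using OnePoint.rec <;>
    simp only [chordal, dist_self, dist_invStereographic_coe_coe, dist_invStereographic_coe_infty,
      dist_comm (invStereographic ∞)] <;> ring

lemma chordal_nonneg (u v : OnePoint (En n)) : 0 ≤ chordal u v := by
  rw [chordal_eq_half_dist]
  positivity

lemma chordal_comm (u v : OnePoint (En n)) : chordal u v = chordal v u := by
  rw [chordal_eq_half_dist, chordal_eq_half_dist, dist_comm]

lemma chordal_le_one (u v : OnePoint (En n)) : chordal u v ≤ 1 := by
  have := dist_le_norm_add_norm (invStereographic u) (invStereographic v)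
  rw [norm_invStereographic, norm_invStereographic] at this
  rw [chordal_eq_half_dist]
  linarith

lemma chordal_ptolemy (a b c d : OnePoint (En n)) :
    chordal a c * chordal b d ≤ chordal a b * chordal c d + chordal a d * chordal b c := by
  have := EuclideanGeometry.mul_dist_le_mul_dist_add_mul_dist (invStereographic a)
    (invStereographic b) (invStereographic c) (invStereographic d)
  simp only [chordal_eq_half_dist]
  linarith

lemma chordal_pos {u v : OnePoint (En n)} (h : u ≠ v) : 0 < chordal u v := by
  induction u using OnePoint.rec <;> induction v using OnePoint.rec
  case infty.infty => exact absurd rfl h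
  case coe.coe x y =>
    simp only [chordal]
    exact div_pos (norm_sub_pos_iff.mpr fun hxy => h (hxy ▸ rfl)) (by positivity)
  all_goals simp only [chordal]; positivity

lemma exists_pos_le_chordal {F : Set (OnePoint (En n))} (hF : IsClosed F) {x : OnePoint (En n)}
    (hx : x ∉ F) : ∃ c > 0, ∀ a ∈ F, c ≤ chordal a x := by
  have hK : IsClosed (invStereographic '' F) :=
    (hF.isCompact.image continuous_invStereographic).isClosed
  have hxK : invStereographic x ∉ invStereographic '' F := by
    rintro ⟨a, ha, hax⟩
    have := chordal_pos (ne_of_mem_of_not_mem ha hx)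
    rw [chordal_eq_half_dist, hax, dist_self, zero_div] at this
    exact this.false
  obtain ⟨ε, hε, hball⟩ := Metric.isOpen_iff.mp hK.isOpen_compl _ hxK
  refine ⟨ε / 2, by positivity, fun a ha => ?_⟩
  have : ¬ dist (invStereographic a) (invStereographic x) < ε :=
    fun h => hball (Metric.mem_ball.mpr h) ⟨a, ha, rfl⟩
  rw [chordal_eq_half_dist]
  linarith [not_lt.mp this]

end Chordal

section Arcosh

lemma arcosh_nonneg {u : ℝ} (hu : 1 ≤ u) : 0 ≤ arcosh u :=
  Real.log_nonneg (le_add_of_le_of_nonneg hu (Real.sqrt_nonneg _))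

lemma arcosh_le_arcosh {u v : ℝ} (hu : 1 ≤ u) (huv : u ≤ v) : arcosh u ≤ arcosh v := by
  have hpos : 0 < u + √(u ^ 2 - 1) := by positivity
  exact Real.log_le_log hpos (add_le_add huv (Real.sqrt_le_sqrt (by nlinarith)))

lemma arcosh_one_add_sq_div_eq_log {s : ℝ} (hs : 0 ≤ s) :
    arcosh (1 + s ^ 2 / (2 * (1 + s))) = Real.log (1 + s) := by
  have hs' : 0 < 1 + s := by linarith
  have hsq : (1 + s ^ 2 / (2 * (1 + s))) ^ 2 - 1 = (s * (s + 2) / (2 * (1 + s))) ^ 2 := by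
    field_simp
    ring
  rw [arcosh, hsq, Real.sqrt_sq (by positivity)]
  congr 1
  field_simp
  ring

lemma log_one_add_le_arcosh {s t : ℝ} (hs : 0 ≤ s) (h : s / (1 + s) ≤ t) :
    Real.log (1 + s) ≤ arcosh (1 + s * t / 2) := by
  rw [← arcosh_one_add_sq_div_eq_log hs]
  refine arcosh_le_arcosh (le_add_of_nonneg_right (by positivity)) ?_
  have hsq : s ^ 2 / (2 * (1 + s)) = s * (s / (1 + s)) / 2 := by
    field_simp
  rw [hsq]
  gcongr

end Arcosh

lemma div_div_one_add_div_le {P A B : ℝ} (hP : 0 ≤ P) (hA : 0 < A) (hB : 0 < B)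
    (h : B ≤ A + P) : P / A / (1 + P / A) ≤ P / B := by
  have hAP : P / A / (1 + P / A) = P / (A + P) := by
    field_simp
  rw [hAP]
  exact div_le_div_of_nonneg_left hP hB h

section CrossRatio

variable {n : ℕ}

lemma crossRatio_nonneg (a b c d : OnePoint (En n)) : 0 ≤ crossRatio a b c d :=
  div_nonneg (mul_nonneg (chordal_nonneg _ _) (chordal_nonneg _ _))
    (mul_nonneg (chordal_nonneg _ _) (chordal_nonneg _ _))

lemma crossRatio_le_inv (a b c d : OnePoint (En n)) :
    crossRatio a b c d ≤ (chordal a b * chordal c d)⁻¹ := by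
  rw [crossRatio, div_eq_mul_inv]
  exact mul_le_of_le_one_left (inv_nonneg.mpr (mul_nonneg (chordal_nonneg _ _)
    (chordal_nonneg _ _))) (mul_le_one₀ (chordal_le_one _ _) (chordal_nonneg _ _)
    (chordal_le_one _ _))

lemma crossRatio_div_one_add_le {a b x y : OnePoint (En n)} (hax : a ≠ x) (hby : b ≠ y)
    (hay : a ≠ y) (hbx : b ≠ x) :
    crossRatio a x b y / (1 + crossRatio a x b y) ≤ crossRatio a y b x := by
  have hptolemy : chordal a y * chordal b x ≤
      chordal a x * chordal b y + chordal a b * chordal x y := by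
    have := chordal_ptolemy a b y x
    rw [chordal_comm y x] at this
    linarith
  rw [crossRatio, crossRatio, chordal_comm y x]
  exact div_div_one_add_div_le (mul_nonneg (chordal_nonneg _ _) (chordal_nonneg _ _))
    (mul_pos (chordal_pos hax) (chordal_pos hby)) (mul_pos (chordal_pos hay) (chordal_pos hbx))
    hptolemy

lemma log_one_add_crossRatio_le_arcosh {a b x y : OnePoint (En n)} (hax : a ≠ x) (hby : b ≠ y)
    (hay : a ≠ y) (hbx : b ≠ x) :
    Real.log (1 + crossRatio a x b y) ≤
      arcosh (1 + crossRatio a x b y * crossRatio a y b x / 2) :=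
  log_one_add_le_arcosh (crossRatio_nonneg _ _ _ _) (crossRatio_div_one_add_le hax hby hay hbx)

lemma bddAbove_arcosh_crossRatio {F : Set (OnePoint (En n))} (hF : IsClosed F)
    {x y : OnePoint (En n)} (hx : x ∉ F) (hy : y ∉ F) :
    BddAbove {r : ℝ | ∃ a ∈ F, ∃ b ∈ F,
      r = arcosh (1 + crossRatio a x b y * crossRatio a y b x / 2)} := by
  obtain ⟨cx, hcx, hFx⟩ := exists_pos_le_chordal hF hx
  obtain ⟨cy, hcy, hFy⟩ := exists_pos_le_chordal hF hy
  have hbound : ∀ a ∈ F, ∀ b ∈ F,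
      crossRatio a x b y * crossRatio a y b x ≤ (cx * cy)⁻¹ ^ 2 := by
    intro a ha b hb
    have hxy : crossRatio a x b y ≤ (cx * cy)⁻¹ := (crossRatio_le_inv a x b y).trans <|
      inv_anti₀ (mul_pos hcx hcy) (mul_le_mul (hFx a ha) (hFy b hb) hcy.le (chordal_nonneg _ _))
    have hyx : crossRatio a y b x ≤ (cy * cx)⁻¹ := (crossRatio_le_inv a y b x).trans <|
      inv_anti₀ (mul_pos hcy hcx) (mul_le_mul (hFy a ha) (hFx b hb) hcx.le (chordal_nonneg _ _))
    rw [mul_comm cy cx] at hyx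
    rw [sq]
    exact mul_le_mul hxy hyx (crossRatio_nonneg _ _ _ _) (by positivity)
  refine ⟨arcosh (1 + (cx * cy)⁻¹ ^ 2 / 2), ?_⟩
  rintro _ ⟨a, ha, b, hb, rfl⟩
  have := mul_nonneg (crossRatio_nonneg a x b y) (crossRatio_nonneg a y b x)
  exact arcosh_le_arcosh (by linarith) (by linarith [hbound a ha b hb])

lemma rho_nonneg (G : Set (OnePoint (En n))) (x y : OnePoint (En n)) : 0 ≤ rho G x y := by
  refine Real.sSup_nonneg ?_
  rintro _ ⟨a, -, b, -, rfl⟩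
  have := mul_nonneg (crossRatio_nonneg a x b y) (crossRatio_nonneg a y b x)
  exact arcosh_nonneg (by linarith)

end CrossRatio

theorem seittenranta_le_rho_general (n : ℕ) (G : Set (OnePoint (En n)))
    (hopen : IsOpen G) (x y : OnePoint (En n)) (hx : x ∈ G) (hy : y ∈ G) :
    seittenranta G x y ≤ rho G x y := by
  have hdisj : Disjoint (frontier G) G := disjoint_frontier_iff_isOpen.mpr hopen
  have hxF : x ∉ frontier G := hdisj.notMem_of_mem_right hx
  have hyF : y ∉ frontier G := hdisj.notMem_of_mem_right hy
  have hbdd := bddAbove_arcosh_crossRatio isClosed_frontier hxF hyF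
  refine Real.sSup_le ?_ (rho_nonneg G x y)
  rintro _ ⟨a, ha, b, hb, rfl⟩
  refine (log_one_add_crossRatio_le_arcosh ?_ ?_ ?_ ?_).trans (le_csSup hbdd ⟨a, ha, b, hb, rfl⟩)
  · exact ne_of_mem_of_not_mem ha hxF
  · exact ne_of_mem_of_not_mem hb hyF
  · exact ne_of_mem_of_not_mem ha hyF
  · exact ne_of_mem_of_not_mem hb hxF

/-- δ_G ≤ ρ_G for any domain G ⊆ ℝ̄ⁿ with at least two boundary points. -/
theorem seittenranta_le_rho (n : ℕ) (hn : 2 ≤ n) (G : Set (OnePoint (En n)))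
    (hopen : IsOpen G) (hconn : IsConnected G) (hbdry : (frontier G).Nontrivial)
    (x y : OnePoint (En n)) (hx : x ∈ G) (hy : y ∈ G) :
    seittenranta G x y ≤ rho G x y :=
  seittenranta_le_rho_general n G hopen x y hx hy

end
end

section
/- Let G ⊊ ℝⁿ be a domain and let 0 < q ≤ p < ∞. Then for all x, y ∈ G, j_G^p(x,y) ≤ j_G^q(x,y) ≤ 2^{1/q − 1/p} · j_G^p(x,y). -/
/-! For each boundary point `a`, put `A = |x−y|/|x−a|` and `B = |x−y|/|y−a|`. The power-mean
inequalities give `‖(A,B)‖_p ≤ ‖(A,B)‖_q ≤ 2^(1/q−1/p) ‖(A,B)‖_p`, and Bernoulli's inequality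
`1 + c t ≤ (1 + t)^c` for `c ≥ 1` moves the constant out of the logarithm. Both inequalities hold
termwise, so they pass to the suprema over `∂G`. -/

open OnePoint

noncomputable section

namespace Real

open scoped Pointwise NNReal

variable {ι : Type*} {s : Set ι} {f g : ι → ℝ}

/-- Unlike `csSup_le_csSup`, this needs no boundedness or nonemptiness: in `ℝ` an empty or
unbounded set has supremum `0`, which is why `f ≥ 0` is assumed. -/
theorem sSup_image_le_sSup_image (hf : ∀ i ∈ s, 0 ≤ f i) (hfg : ∀ i ∈ s, f i ≤ g i)
    (hbdd : BddAbove (f '' s) → BddAbove (g '' s)) : sSup (f '' s) ≤ sSup (g '' s) := by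
  by_cases hf_bdd : BddAbove (f '' s)
  · have hg_bdd := hbdd hf_bdd
    refine Real.sSup_le ?_ (Real.sSup_nonneg ?_)
    · rintro _ ⟨i, hi, rfl⟩
      exact (hfg i hi).trans (le_csSup hg_bdd ⟨i, hi, rfl⟩)
    · rintro _ ⟨i, hi, rfl⟩
      exact (hf i hi).trans (hfg i hi)
  · have hg_unbdd : ¬BddAbove (g '' s) := fun ⟨b, hb⟩ =>
      hf_bdd ⟨b, by rintro _ ⟨i, hi, rfl⟩; exact (hfg i hi).trans (hb ⟨i, hi, rfl⟩)⟩
    rw [Real.sSup_of_not_bddAbove hf_bdd, Real.sSup_of_not_bddAbove hg_unbdd]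

theorem sSup_image_le_sSup_image_and_le_mul {c : ℝ} (hc : 0 ≤ c) (hf : ∀ i ∈ s, 0 ≤ f i)
    (hfg : ∀ i ∈ s, f i ≤ g i) (hgf : ∀ i ∈ s, g i ≤ c * f i) :
    sSup (f '' s) ≤ sSup (g '' s) ∧ sSup (g '' s) ≤ c * sSup (f '' s) := by
  have hcf : (fun i => c * f i) '' s = c • (f '' s) := by
    rw [← Set.image_smul, Set.image_image]; rfl
  constructor
  · refine sSup_image_le_sSup_image hf hfg fun ⟨b, hb⟩ => ⟨c * b, ?_⟩
    rintro _ ⟨i, hi, rfl⟩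
    exact (hgf i hi).trans (mul_le_mul_of_nonneg_left (hb ⟨i, hi, rfl⟩) hc)
  · rw [← smul_eq_mul, ← Real.sSup_smul_of_nonneg hc, ← hcf]
    refine sSup_image_le_sSup_image (fun i hi => (hf i hi).trans (hfg i hi)) hgf
      fun ⟨b, hb⟩ => ⟨c * b, ?_⟩
    rintro _ ⟨i, hi, rfl⟩
    exact mul_le_mul_of_nonneg_left ((hfg i hi).trans (hb ⟨i, hi, rfl⟩)) hc

theorem rpow_add_rpow_le_two_rpow_mul {p q a b : ℝ} (ha : 0 ≤ a) (hb : 0 ≤ b) (hq : 0 < q)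
    (hqp : q ≤ p) :
    (a ^ q + b ^ q) ^ (1 / q) ≤ 2 ^ (1 / q - 1 / p) * (a ^ p + b ^ p) ^ (1 / p) := by
  lift a to ℝ≥0 using ha
  lift b to ℝ≥0 using hb
  have hp : 0 < p := hq.trans_le hqp
  -- power-mean inequality for the exponent `p / q ≥ 1`, applied to `a ^ q` and `b ^ q`
  have h := NNReal.rpow_le_rpow
    (NNReal.rpow_add_le_mul_rpow_add_rpow (a ^ q) (b ^ q) ((one_le_div hq).mpr hqp))
    (one_div_pos.mpr hp).le
  have e₁ : p / q * (1 / p) = 1 / q := by field_simp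
  have e₂ : q * (p / q) = p := by field_simp
  have e₃ : (p / q - 1) * (1 / p) = 1 / q - 1 / p := by field_simp
  simp only [NNReal.mul_rpow, ← NNReal.rpow_mul, e₁, e₂, e₃] at h
  exact_mod_cast h

theorem log_one_add_mul_le_mul_log_one_add {c t : ℝ} (hc : 1 ≤ c) (ht : 0 ≤ t) :
    log (1 + c * t) ≤ c * log (1 + t) := by
  rw [← Real.log_rpow (by linarith)]
  exact Real.log_le_log (by positivity) (one_add_mul_self_le_rpow_one_add (by linarith) hc)

end Real

theorem jP_eq_sSup_image {n : ℕ} (p : ℝ) (G : Set (En n)) (x y : En n) :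
    jP p G x y = sSup ((fun a => Real.log
      (1 + ((‖x - y‖ / ‖x - a‖) ^ p + (‖x - y‖ / ‖y - a‖) ^ p) ^ (1 / p))) '' frontier G) := by
  simp only [jP, Real.div_rpow (norm_nonneg _) (norm_nonneg _), Set.image, eq_comm]

theorem jP_le_jP_le_const_mul_jP_general (n : ℕ) (G : Set (En n))
    (p q : ℝ) (hq : 0 < q) (hqp : q ≤ p)
    (x y : En n) :
    jP p G x y ≤ jP q G x y ∧ jP q G x y ≤ (2 : ℝ) ^ (1 / q - 1 / p) * jP p G x y := by
  have hc : 1 ≤ (2 : ℝ) ^ (1 / q - 1 / p) :=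
    Real.one_le_rpow one_le_two (sub_nonneg.mpr (one_div_le_one_div_of_le hq hqp))
  rw [jP_eq_sSup_image, jP_eq_sSup_image]
  refine Real.sSup_image_le_sSup_image_and_le_mul (zero_le_one.trans hc)
    (fun a _ => Real.log_nonneg (by simp only [le_add_iff_nonneg_right]; positivity))
    (fun a _ => Real.log_le_log (by positivity) ?_) (fun a _ => ?_)
  · gcongr 1 + ?_
    exact Real.rpow_add_rpow_le (by positivity) (by positivity) hq hqp
  · refine le_trans (Real.log_le_log (by positivity) ?_)
      (Real.log_one_add_mul_le_mul_log_one_add hc (by positivity))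
    gcongr 1 + ?_
    exact Real.rpow_add_rpow_le_two_rpow_mul (by positivity) (by positivity) hq hqp

/-- j_G^p ≤ j_G^q ≤ 2^(1/q − 1/p) · j_G^p for 0 < q ≤ p < ∞ and a proper subdomain G of ℝⁿ. -/
theorem jP_le_jP_le_const_mul_jP (n : ℕ) (hn : 2 ≤ n) (G : Set (En n))
    (hopen : IsOpen G) (hconn : IsConnected G) (hne : G ≠ Set.univ)
    (p q : ℝ) (hq : 0 < q) (hqp : q ≤ p)
    (x y : En n) (hx : x ∈ G) (hy : y ∈ G) :
    jP p G x y ≤ jP q G x y ∧ jP q G x y ≤ (2 : ℝ) ^ (1 / q - 1 / p) * jP p G x y :=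
  jP_le_jP_le_const_mul_jP_general n G p q hq hqp x y

end
end

section
/- Let G ⊊ ℝⁿ be a domain and let 0 < p < ∞. Then for all x, y ∈ G, j_G^p(x,y) ≤ δ_G^p(x,y), where in δ_G^p the boundary is taken in ℝ̄ⁿ (so it contains ∞ if G is unbounded). -/
open OnePoint

noncomputable section

/-!
For `a ∈ ∂G` it suffices to find `b ∈ ∂G ⊆ ℝ̄ⁿ` with
`(|x-y|/|x-a|)^p + (|x-y|/|y-a|)^p ≤ |x,a,y,b|^p + |x,b,y,a|^p`.
If `G` is unbounded, `b = ∞` gives equality. Otherwise, assuming `|x-a| ≤ |y-a|`, let `b` be a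
point where the ray from `a` through `y` leaves `G`. Then `|x,a,y,b| = r |x-y|/|x-a|` and
`|x,b,y,a| = s |x-y|/|y-a|`, where `r = |a-b|/|y-b| ≥ 1`, `s = |a-b|/|x-b|` and
`r s = |a-b|^2/(|y-b||x-b|) ≥ 1` because `|y-b| = |a-b| - |a-y|` and `|x-b| ≤ |a-b| + |a-y|`;
as the first term is the larger one, this is enough.
-/

/-- With `A = r ^ p` and `B = s ^ p`: `A * B ≥ 1` gives `A + B ≥ 2` (AM-GM), and then
`(A - 1) X ^ p + (B - 1) Y ^ p = (A - 1) (X ^ p - Y ^ p) + (A + B - 2) Y ^ p ≥ 0`. -/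
lemma rpow_add_rpow_le_mul_rpow_add_mul_rpow {p X Y r s : ℝ} (hp : 0 ≤ p) (hY : 0 ≤ Y)
    (hYX : Y ≤ X) (hr : 1 ≤ r) (hs : 0 ≤ s) (hrs : 1 ≤ r * s) :
    X ^ p + Y ^ p ≤ (r * X) ^ p + (s * Y) ^ p := by
  rw [Real.mul_rpow (by linarith) (hY.trans hYX), Real.mul_rpow hs hY]
  have hA : 1 ≤ r ^ p := Real.one_le_rpow hr hp
  have hB : 0 ≤ s ^ p := Real.rpow_nonneg hs p
  have hAB : 1 ≤ r ^ p * s ^ p := by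
    rw [← Real.mul_rpow (by linarith) hs]
    exact Real.one_le_rpow hrs hp
  have hAB2 : 2 ≤ r ^ p + s ^ p := by nlinarith [sq_nonneg (r ^ p - s ^ p)]
  have hYX' : Y ^ p ≤ X ^ p := Real.rpow_le_rpow hY hYX hp
  nlinarith [mul_nonneg (sub_nonneg.2 hA) (sub_nonneg.2 hYX'),
    mul_nonneg (sub_nonneg.2 hAB2) (Real.rpow_nonneg hY p)]

lemma norm_sub_mul_norm_sub_le_sq {E : Type*} [SeminormedAddCommGroup E] {a b u v : E}
    (hv : ‖a - b‖ = ‖a - v‖ + ‖v - b‖) (hu : ‖u - a‖ ≤ ‖v - a‖) :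
    ‖v - b‖ * ‖u - b‖ ≤ ‖a - b‖ ^ 2 := by
  have hub : ‖u - b‖ ≤ ‖a - v‖ + ‖a - b‖ := by
    rw [norm_sub_rev a v]
    linarith [norm_sub_le_norm_sub_add_norm_sub u a b]
  nlinarith [norm_nonneg (v - b), norm_nonneg (a - v)]

lemma IsPreconnected.inter_frontier_nonempty {X : Type*} [TopologicalSpace X] {s t : Set X}
    (hs : IsPreconnected s) (ht : IsOpen t) (hst : (s ∩ t).Nonempty) (hst' : ¬ s ⊆ t) :
    (s ∩ frontier t).Nonempty := by
  by_contra h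
  refine hst' (hs.subset_of_closure_inter_subset ht hst fun z ⟨hzt, hzs⟩ => ?_)
  rw [closure_eq_self_union_frontier] at hzt
  exact hzt.resolve_right fun hzf => h ⟨z, hzs, hzf⟩

lemma exists_mem_frontier_norm_sub_eq_add {E : Type*} [NormedAddCommGroup E] [NormedSpace ℝ E]
    {G : Set E} (hG : IsOpen G) (hbdd : Bornology.IsBounded G) {a v : E} (hv : v ∈ G)
    (ha : a ∉ G) : ∃ b ∈ frontier G, ‖a - b‖ = ‖a - v‖ + ‖v - b‖ := by
  set ray : ℝ → E := fun t => a + t • (v - a)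
  have hva : 0 < ‖v - a‖ := norm_pos_iff.2 (sub_ne_zero.2 fun h => ha (h ▸ hv))
  have ray_zero : ray 0 = a := by simp [ray]
  have ray_one : ray 1 = v := by simp [ray]
  have norm_ray_sub (t t' : ℝ) : ‖ray t - ray t'‖ = |t - t'| * ‖v - a‖ := by
    rw [show ray t - ray t' = (t - t') • (v - a) by simp only [ray]; module, norm_smul,
      Real.norm_eq_abs]
  have ray_not_subset : ¬ ray '' Set.Ici 1 ⊆ G := fun hsub => by
    obtain ⟨R, hR⟩ := hbdd.subset_ball a
    have hR0 : 0 < R := dist_nonneg.trans_lt (hR hv)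
    have hfar := hR (hsub ⟨1 + R / ‖v - a‖,
      (le_add_of_nonneg_right (by positivity) : (1 : ℝ) ≤ _), rfl⟩)
    have hdist := norm_ray_sub (1 + R / ‖v - a‖) 0
    rw [ray_zero, sub_zero, abs_of_pos (by positivity), add_mul,
      div_mul_cancel₀ _ hva.ne'] at hdist
    rw [Metric.mem_ball, dist_eq_norm, hdist] at hfar
    linarith
  obtain ⟨_, ⟨t, ht, rfl⟩, hbG⟩ :=
    (isPreconnected_Ici.image ray (by fun_prop)).inter_frontier_nonempty hG
      ⟨v, ⟨1, Set.self_mem_Ici, ray_one⟩, hv⟩ ray_not_subset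
  have ht : 1 ≤ t := ht
  refine ⟨ray t, hbG, ?_⟩
  rw [← ray_zero, ← ray_one, norm_ray_sub, norm_ray_sub, norm_ray_sub,
    abs_of_nonpos (show 0 - t ≤ 0 by linarith), abs_of_nonpos (show (0 : ℝ) - 1 ≤ 0 by norm_num),
    abs_of_nonpos (show 1 - t ≤ 0 by linarith)]
  ring

section OnePointFrontier

variable {X : Type*}

lemma OnePoint.coe_mem_frontier_image_coe_iff [TopologicalSpace X] {G : Set X} {a : X} :
    (a : OnePoint X) ∈ frontier ((↑) '' G) ↔ a ∈ frontier G := by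
  rw [← Set.mem_preimage, OnePoint.isOpenMap_coe.preimage_frontier_eq_frontier_preimage
    OnePoint.continuous_coe, Set.preimage_image_eq _ OnePoint.coe_injective]

lemma OnePoint.infty_mem_frontier_image_coe [PseudoMetricSpace X] {G : Set X}
    (hG : ¬ Bornology.IsBounded G) : (∞ : OnePoint X) ∈ frontier ((↑) '' G) := by
  refine ⟨?_, fun h => OnePoint.infty_notMem_image_coe (interior_subset h)⟩
  refine (mem_closure_iff_nhds_basis' OnePoint.hasBasis_nhds_infty).2 fun K ⟨_, hK⟩ => ?_
  obtain ⟨g, hgG, hgK⟩ := Set.not_subset.1 fun hGK => hG (hK.isBounded.subset hGK)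
  exact ⟨g, Or.inl ⟨g, hgK, rfl⟩, g, hgG, rfl⟩

end OnePointFrontier

section Chordal

variable {n : ℕ}

lemma div_le_chordal {z : En n} {d : ℝ} (hd : 0 ≤ d) {e : OnePoint (En n)}
    (he : ∀ w : En n, e = w → d ≤ ‖z - w‖) :
    d / (√(1 + ‖z‖ ^ 2) * (1 + ‖z‖ + d)) ≤ chordal z e := by
  have hz : 0 < √(1 + ‖z‖ ^ 2) := by positivity
  cases e with
  | infty =>
    simp only [chordal]
    rw [div_le_div_iff₀ (by positivity) hz]
    nlinarith [norm_nonneg z]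
  | coe w =>
    have hzw := he w rfl
    have hw : √(1 + ‖w‖ ^ 2) ≤ 1 + ‖z‖ + ‖z - w‖ := by
      rw [Real.sqrt_le_iff]
      refine ⟨by positivity, ?_⟩
      nlinarith [norm_le_norm_add_norm_sub z w, norm_nonneg w, norm_nonneg z]
    simp only [chordal]
    rw [div_le_div_iff₀ (by positivity) (by positivity)]
    have : d * √(1 + ‖w‖ ^ 2) ≤ ‖z - w‖ * (1 + ‖z‖ + d) := by
      nlinarith [mul_le_mul_of_nonneg_left hw hd, norm_nonneg z]
    nlinarith [mul_le_mul_of_nonneg_left this hz.le]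

lemma exists_pos_le_chordal_of_notMem {U : Set (OnePoint (En n))} (hU : IsOpen U) {z : En n}
    (hz : (z : OnePoint (En n)) ∈ U) : ∃ c > 0, ∀ e ∉ U, c ≤ chordal z e := by
  obtain ⟨ε, hε, hball⟩ := Metric.isOpen_iff.1 (hU.preimage continuous_coe) z hz
  refine ⟨ε / (√(1 + ‖z‖ ^ 2) * (1 + ‖z‖ + ε)), by positivity, fun e he => ?_⟩
  refine div_le_chordal hε.le fun w hw => not_lt.1 fun hlt => he ?_
  rw [hw]
  exact hball (by rwa [Metric.mem_ball, dist_comm, dist_eq_norm])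

lemma crossRatio_swap (x y a b : OnePoint (En n)) : crossRatio y a x b = crossRatio x b y a := by
  simp only [crossRatio, chordal_comm y x, chordal_comm b a, chordal_comm y a]
  ring

lemma crossRatio_coe (x a y b : En n) :
    crossRatio (x : OnePoint (En n)) a y b = ‖x - y‖ * ‖a - b‖ / (‖x - a‖ * ‖y - b‖) := by
  have hS : √(1 + ‖x‖ ^ 2) * √(1 + ‖y‖ ^ 2) * √(1 + ‖a‖ ^ 2) * √(1 + ‖b‖ ^ 2) ≠ 0 := by
    positivity
  rw [← div_div_div_cancel_right₀ hS]
  simp only [crossRatio, chordal]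
  ring

lemma crossRatio_coe_infty (x a y : En n) :
    crossRatio (x : OnePoint (En n)) a y ∞ = ‖x - y‖ / ‖x - a‖ := by
  have hS : √(1 + ‖x‖ ^ 2) * √(1 + ‖y‖ ^ 2) * √(1 + ‖a‖ ^ 2) ≠ 0 := by positivity
  rw [← div_div_div_cancel_right₀ hS]
  simp only [crossRatio, chordal]
  ring

lemma crossRatio_infty_coe (x y a : En n) :
    crossRatio (x : OnePoint (En n)) ∞ y a = ‖x - y‖ / ‖y - a‖ := by
  have hS : √(1 + ‖x‖ ^ 2) * √(1 + ‖y‖ ^ 2) * √(1 + ‖a‖ ^ 2) ≠ 0 := by positivity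
  rw [← div_div_div_cancel_right₀ hS]
  simp only [crossRatio, chordal]
  ring

end Chordal

section DeltaP

variable {n : ℕ}

lemma le_deltaP {p : ℝ} (hp : 0 ≤ p) {U : Set (OnePoint (En n))} (hU : IsOpen U) {x y : En n}
    (hx : (x : OnePoint (En n)) ∈ U) (hy : (y : OnePoint (En n)) ∈ U) {a b : OnePoint (En n)}
    (ha : a ∈ frontier U) (hb : b ∈ frontier U) :
    Real.log (1 + (crossRatio x a y b ^ p + crossRatio x b y a ^ p) ^ (1 / p)) ≤
      deltaP p U x y := by
  -- `deltaP` is a real `sSup`, which is junk unless the set is bounded above.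
  obtain ⟨c, hc, hcx⟩ := exists_pos_le_chordal_of_notMem hU hx
  obtain ⟨c', hc', hcy⟩ := exists_pos_le_chordal_of_notMem hU hy
  have crossRatio_le (e f) (he : e ∈ frontier U) (hf : f ∈ frontier U) :
      crossRatio x e y f ≤ 1 / (c * c') := by
    rw [hU.frontier_eq] at he hf
    refine div_le_div₀ zero_le_one ?_ (by positivity) (mul_le_mul (hcx e he.2) (hcy f hf.2)
      hc'.le (chordal_nonneg _ _))
    exact mul_le_one₀ (chordal_le_one _ _) (chordal_nonneg _ _) (chordal_le_one _ _)
  refine le_csSup ⟨Real.log (1 + ((1 / (c * c')) ^ p + (1 / (c * c')) ^ p) ^ (1 / p)), ?_⟩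
    ⟨a, ha, b, hb, rfl⟩
  rintro _ ⟨a, ha, b, hb, rfl⟩
  have := crossRatio_nonneg (x : OnePoint (En n)) a y b
  have := crossRatio_nonneg (x : OnePoint (En n)) b y a
  gcongr <;> exact crossRatio_le _ _ ‹_› ‹_›

lemma exists_mem_frontier_rpow_add_rpow_le {G : Set (En n)} (hG : IsOpen G) {a x y : En n}
    (ha : a ∈ frontier G) (hx : x ∈ G) (hy : y ∈ G) {p : ℝ} (hp : 0 ≤ p) :
    ∃ b ∈ frontier ((↑) '' G : Set (OnePoint (En n))),
      (‖x - y‖ / ‖x - a‖) ^ p + (‖x - y‖ / ‖y - a‖) ^ p ≤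
        crossRatio x a y b ^ p + crossRatio x b y a ^ p := by
  by_cases hbdd : Bornology.IsBounded G
  swap
  · exact ⟨∞, OnePoint.infty_mem_frontier_image_coe hbdd,
      by rw [crossRatio_coe_infty, crossRatio_infty_coe]⟩
  wlog hxy : ‖x - a‖ ≤ ‖y - a‖ generalizing x y
  · obtain ⟨b, hb, h⟩ := this hy hx (le_of_not_ge hxy)
    refine ⟨b, hb, ?_⟩
    rw [crossRatio_swap, crossRatio_swap (x : OnePoint (En n)), norm_sub_rev y] at h
    linarith
  have haG : a ∉ G := ((hG.frontier_eq ▸ ha) : a ∈ closure G \ G).2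
  obtain ⟨b, hb, hab⟩ := exists_mem_frontier_norm_sub_eq_add hG hbdd hy haG
  have hbG : b ∉ G := ((hG.frontier_eq ▸ hb) : b ∈ closure G \ G).2
  have hxa : 0 < ‖x - a‖ := norm_pos_iff.2 (sub_ne_zero.2 fun h => haG (h ▸ hx))
  have hxb : 0 < ‖x - b‖ := norm_pos_iff.2 (sub_ne_zero.2 fun h => hbG (h ▸ hx))
  have hyb : 0 < ‖y - b‖ := norm_pos_iff.2 (sub_ne_zero.2 fun h => hbG (h ▸ hy))
  refine ⟨b, OnePoint.coe_mem_frontier_image_coe_iff.2 hb, ?_⟩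
  rw [crossRatio_coe, crossRatio_coe, norm_sub_rev b a,
    show ‖x - y‖ * ‖a - b‖ / (‖x - a‖ * ‖y - b‖) = ‖a - b‖ / ‖y - b‖ * (‖x - y‖ / ‖x - a‖) by ring,
    show ‖x - y‖ * ‖a - b‖ / (‖x - b‖ * ‖y - a‖) = ‖a - b‖ / ‖x - b‖ * (‖x - y‖ / ‖y - a‖) by ring]
  refine rpow_add_rpow_le_mul_rpow_add_mul_rpow hp (by positivity)
    (div_le_div_of_nonneg_left (norm_nonneg _) hxa hxy) ?_ (by positivity) ?_
  · rw [one_le_div hyb]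
    linarith [norm_nonneg (a - y)]
  · rw [div_mul_div_comm, one_le_div (by positivity), ← sq]
    exact norm_sub_mul_norm_sub_le_sq hab hxy

end DeltaP

theorem jP_le_deltaP_general (n : ℕ) (G : Set (En n))
    (hopen : IsOpen G) (hne : G ≠ Set.univ)
    (p : ℝ) (hp : 0 < p)
    (x y : En n) (hx : x ∈ G) (hy : y ∈ G) :
    jP p G x y ≤
      deltaP p (((↑) : En n → OnePoint (En n)) '' G) (x : OnePoint (En n)) (y : OnePoint (En n)) := by
  obtain ⟨a₀, ha₀⟩ := nonempty_frontier_iff.2 ⟨⟨x, hx⟩, hne⟩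
  refine csSup_le ⟨_, a₀, ha₀, rfl⟩ ?_
  rintro _ ⟨a, ha, rfl⟩
  obtain ⟨b, hb, hsum⟩ := exists_mem_frontier_rpow_add_rpow_le hopen ha hx hy hp.le
  refine le_trans ?_ (le_deltaP hp.le (OnePoint.isOpen_image_coe.2 hopen) ⟨x, hx, rfl⟩
    ⟨y, hy, rfl⟩ (OnePoint.coe_mem_frontier_image_coe_iff.2 ha) hb)
  rw [← Real.div_rpow (norm_nonneg _) (norm_nonneg _),
    ← Real.div_rpow (norm_nonneg _) (norm_nonneg _)]
  gcongr

/-- j_G^p ≤ δ_G^p for 0 < p < ∞ and a proper subdomain G of ℝⁿ, where in δ_G^p the boundary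
is taken in ℝ̄ⁿ = ℝⁿ ∪ {∞}. -/
theorem jP_le_deltaP (n : ℕ) (hn : 2 ≤ n) (G : Set (En n))
    (hopen : IsOpen G) (hconn : IsConnected G) (hne : G ≠ Set.univ)
    (p : ℝ) (hp : 0 < p)
    (x y : En n) (hx : x ∈ G) (hy : y ∈ G) :
    jP p G x y ≤
      deltaP p (((↑) : En n → OnePoint (En n)) '' G) (x : OnePoint (En n)) (y : OnePoint (En n)) :=
  jP_le_deltaP_general n G hopen hne p hp x y hx hy

end
end

section
/- Let k ≥ 1 and s ≥ k − 1/k be real numbers. Then log(1 + k·s) ≤ arcosh(1 + s²/2), equivalently log(1 + k·s) ≤ log(1 + s²/2 + √(s⁴/4 + s²)). -/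
/-!
Exponentiating, the claim becomes `k s - s²/2 ≤ √((1 + s²/2)² - 1) = √(s² + s⁴/4)`.
When the left side is positive, squaring reduces this to `s² (k² - 1 - k s) ≤ 0`, so everything
rests on `k² - 1 ≤ k s`, which is `k - 1/k ≤ s` multiplied by `k > 0`.
-/

noncomputable section

lemma sq_sub_one_le_mul_of_sub_one_div_le {k s : ℝ} (hk : 0 < k) (hs : k - 1 / k ≤ s) :
    k ^ 2 - 1 ≤ k * s := by
  have := mul_le_mul_of_nonneg_left hs hk.le
  rwa [mul_sub, mul_one_div_cancel hk.ne', ← sq] at this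

lemma one_add_mul_pos_of_sq_sub_one_le {k s : ℝ} (h : k ^ 2 - 1 ≤ k * s) : 0 < 1 + k * s := by
  rcases eq_or_ne k 0 with rfl | hk
  · norm_num
  · linarith [sq_pos_of_ne_zero hk]

lemma mul_le_sq_div_two_add_sqrt {k s : ℝ} (h : k ^ 2 - 1 ≤ k * s) :
    k * s ≤ s ^ 2 / 2 + √((1 + s ^ 2 / 2) ^ 2 - 1) := by
  rcases le_or_gt (k * s - s ^ 2 / 2) 0 with hle | hpos
  · linarith [Real.sqrt_nonneg ((1 + s ^ 2 / 2) ^ 2 - 1)]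
  · suffices k * s - s ^ 2 / 2 ≤ √((1 + s ^ 2 / 2) ^ 2 - 1) by linarith
    rw [Real.le_sqrt' hpos]
    nlinarith [mul_nonneg (sq_nonneg s) (sub_nonneg.2 h)]

theorem log_one_add_mul_le_arcosh {k s : ℝ} (h : k ^ 2 - 1 ≤ k * s) :
    Real.log (1 + k * s) ≤ arcosh (1 + s ^ 2 / 2) := by
  apply Real.log_le_log (one_add_mul_pos_of_sq_sub_one_le h)
  linarith [mul_le_sq_div_two_add_sqrt h]

/-- If k ≥ 1 and s ≥ k − 1/k then log(1 + k·s) ≤ arcosh(1 + s²/2). -/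
theorem log_le_arcosh (k s : ℝ) (hk : 1 ≤ k) (hs : k - 1 / k ≤ s) :
    Real.log (1 + k * s) ≤ arcosh (1 + s ^ 2 / 2) :=
  log_one_add_mul_le_arcosh (sq_sub_one_le_mul_of_sub_one_div_le (by linarith) hs)

end
end

section
/- Let k ≥ 1 and 0 ≤ s ≤ k + 1/k be real numbers. Then arcosh(1 + s²/2) ≤ (arcosh 3 / log 3) · log(1 + k·s). -/
/-!
Since `cosh (2 arsinh (s/2)) = 1 + s²/2`, the left side is `2 arsinh (s/2)`, and the constant
`C = arcosh 3 / log 3` satisfies `C log 3 = 2 arsinh 1` and `1 ≤ C ≤ 2`.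

For `s ≤ 2` the worst case is `k = 1`: `g s = C log (1 + s) - 2 arsinh (s/2)` vanishes at `0`
and `2`, and `g'` has the sign of `-q` for a quadratic `q` increasing on `[0, 2]`, so `g` first
increases and then decreases, hence stays nonnegative.

For `s > 2` the worst case is the least admissible `k`, the one with `k + 1/k = s`, for which
`1 + k s = k² + 2`. Then `C log (k² + 2) - 2 arsinh ((k + 1/k)/2)` vanishes at `k = 1` and is
increasing, because `√(1 + y²) ≥ y` bounds the derivative of the `arsinh` term by that of
`2 log ((k + 1/k)/2)`.
-/

noncomputable section

open Set
open Real hiding arcosh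

theorem arcosh_one_add_sq_div_two {s : ℝ} (hs : 0 ≤ s) :
    arcosh (1 + s ^ 2 / 2) = 2 * arsinh (s / 2) := by
  have hcosh : cosh (2 * arsinh (s / 2)) = 1 + s ^ 2 / 2 := by
    rw [cosh_two_mul, cosh_sq, sinh_arsinh]
    ring
  rw [← hcosh]
  -- `arcosh` is definitionally Mathlib's `Real.arcosh`
  exact Real.arcosh_cosh (mul_nonneg zero_le_two (arsinh_nonneg_iff.mpr (by positivity)))

theorem arcosh_three : arcosh 3 = 2 * arsinh 1 := by
  have h := arcosh_one_add_sq_div_two zero_le_two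
  norm_num at h
  exact h

theorem log_three_le_arcosh_three : log 3 ≤ arcosh 3 :=
  log_le_log (by norm_num) (le_add_of_nonneg_right (sqrt_nonneg _))

theorem arcosh_three_le_two_mul_log_three : arcosh 3 ≤ 2 * log 3 := by
  have h : √(3 ^ 2 - 1) ≤ 6 := sqrt_le_iff.mpr ⟨by norm_num, by norm_num⟩
  calc arcosh 3 ≤ log (3 ^ 2) := log_le_log (by positivity) (by linarith)
    _ = 2 * log 3 := by rw [log_pow]; norm_num

theorem Convex.monotoneOn_of_hasDerivAt_nonneg {D : Set ℝ} (hD : Convex ℝ D) {f f' : ℝ → ℝ}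
    (hf : ∀ x ∈ D, HasDerivAt f (f' x) x) (hf' : ∀ x ∈ interior D, 0 ≤ f' x) :
    MonotoneOn f D :=
  monotoneOn_of_hasDerivWithinAt_nonneg hD (fun x hx ↦ (hf x hx).continuousAt.continuousWithinAt)
    (fun x hx ↦ (hf x (interior_subset hx)).hasDerivWithinAt) hf'

theorem Convex.antitoneOn_of_hasDerivAt_nonpos {D : Set ℝ} (hD : Convex ℝ D) {f f' : ℝ → ℝ}
    (hf : ∀ x ∈ D, HasDerivAt f (f' x) x) (hf' : ∀ x ∈ interior D, f' x ≤ 0) :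
    AntitoneOn f D :=
  antitoneOn_of_hasDerivWithinAt_nonpos hD (fun x hx ↦ (hf x hx).continuousAt.continuousWithinAt)
    (fun x hx ↦ (hf x (interior_subset hx)).hasDerivWithinAt) hf'

theorem nonneg_of_hasDerivAt_of_sign_change {g g' : ℝ → ℝ} {a r b x : ℝ}
    (hr : r ∈ Icc a b) (hg : ∀ y ∈ Icc a b, HasDerivAt g (g' y) y)
    (hpos : ∀ y ∈ Ioo a r, 0 ≤ g' y) (hneg : ∀ y ∈ Ioo r b, g' y ≤ 0)
    (ha : 0 ≤ g a) (hb : 0 ≤ g b) (hx : x ∈ Icc a b) : 0 ≤ g x := by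
  rcases le_total x r with hxr | hrx
  · have hmono : MonotoneOn g (Icc a r) :=
      (convex_Icc a r).monotoneOn_of_hasDerivAt_nonneg
        (fun y hy ↦ hg y ⟨hy.1, hy.2.trans hr.2⟩) (by simpa only [interior_Icc] using hpos)
    exact ha.trans (hmono ⟨le_rfl, hr.1⟩ ⟨hx.1, hxr⟩ hx.1)
  · have hanti : AntitoneOn g (Icc r b) :=
      (convex_Icc r b).antitoneOn_of_hasDerivAt_nonpos
        (fun y hy ↦ hg y ⟨hr.1.trans hy.1, hy.2⟩) (by simpa only [interior_Icc] using hneg)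
    exact hb.trans (hanti ⟨hrx, hx.2⟩ ⟨hr.2, le_rfl⟩ hx.2)

theorem exists_add_inv_eq {k s : ℝ} (hk : 1 ≤ k) (h2s : 2 ≤ s) (hs : s ≤ k + k⁻¹) :
    ∃ x ∈ Icc 1 k, x + x⁻¹ = s := by
  have hcont : ContinuousOn (fun x : ℝ ↦ x + x⁻¹) (Icc 1 k) :=
    continuousOn_id.add (continuousOn_inv₀.mono fun x hx ↦ (zero_lt_one.trans_le hx.1).ne')
  exact intermediate_value_Icc hk hcont ⟨by norm_num [h2s], hs⟩

theorem inv_sqrt_le_div_iff {a b c : ℝ} (ha : 0 < a) (hb : 0 < b) (hc : 0 ≤ c) :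
    (√b)⁻¹ ≤ c / a ↔ a ^ 2 ≤ c ^ 2 * b := by
  rw [inv_eq_one_div, div_le_div_iff₀ (sqrt_pos.2 hb) ha, one_mul,
    ← pow_le_pow_iff_left₀ ha.le (by positivity) two_ne_zero, mul_pow, sq_sqrt hb.le]

theorem div_le_inv_sqrt_iff {a b c : ℝ} (ha : 0 < a) (hb : 0 < b) (hc : 0 ≤ c) :
    c / a ≤ (√b)⁻¹ ↔ c ^ 2 * b ≤ a ^ 2 := by
  rw [inv_eq_one_div, div_le_div_iff₀ ha (sqrt_pos.2 hb), one_mul,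
    ← pow_le_pow_iff_left₀ (by positivity) ha.le two_ne_zero, mul_pow, sq_sqrt hb.le]

section
variable {C : ℝ}

theorem two_mul_arsinh_half_le_mul_log_one_add (hC₁ : 1 ≤ C) (hC₂ : C ≤ 2)
    (hC : 2 * arsinh 1 ≤ C * log 3) {s : ℝ} (hs : s ∈ Icc 0 2) :
    2 * arsinh (s / 2) ≤ C * log (1 + s) := by
  -- the derivative of the difference of the two sides is `≥ 0` exactly where `q ≤ 0`
  set q : ℝ → ℝ := fun t ↦ (1 + t) ^ 2 - C ^ 2 * (1 + (t / 2) ^ 2) with hq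
  have hq_mono : ∀ a b, 0 ≤ a → a ≤ b → q a ≤ q b := by
    intro a b ha hab
    have hC4 : 0 ≤ 1 - C ^ 2 / 4 := by nlinarith
    have : 0 ≤ (b - a) * (2 + (a + b) * (1 - C ^ 2 / 4)) :=
      mul_nonneg (sub_nonneg.2 hab) (by nlinarith [mul_nonneg (add_nonneg ha (ha.trans hab)) hC4])
    simp only [hq]
    nlinarith
  obtain ⟨r, hr, hqr⟩ : ∃ r ∈ Icc (0 : ℝ) 2, q r = 0 :=
    intermediate_value_Icc zero_le_two (by fun_prop)
      ⟨by simp only [hq]; nlinarith, by simp only [hq]; nlinarith⟩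
  have hderiv : ∀ t ∈ Icc (0 : ℝ) 2, HasDerivAt (fun t ↦ C * log (1 + t) - 2 * arsinh (t / 2))
      (C / (1 + t) - (√(1 + (t / 2) ^ 2))⁻¹) t := by
    intro t ht
    have hlog := (((hasDerivAt_id t).const_add 1).log (by simp; linarith [ht.1])).const_mul C
    have harsinh := (((hasDerivAt_id t).div_const 2).arsinh).const_mul 2
    exact (hlog.sub harsinh).congr_deriv (by simp only [id, smul_eq_mul]; ring)
  refine sub_nonneg.1 (nonneg_of_hasDerivAt_of_sign_change
    (g := fun t ↦ C * log (1 + t) - 2 * arsinh (t / 2)) hr hderiv ?_ ?_ ?_ ?_ hs)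
  · intro t ht
    rw [sub_nonneg, inv_sqrt_le_div_iff (by linarith [ht.1]) (by positivity) (by linarith)]
    have := hq_mono t r ht.1.le ht.2.le
    simp only [hq] at this hqr
    linarith
  · intro t ht
    rw [sub_nonpos, div_le_inv_sqrt_iff (by linarith [hr.1, ht.1]) (by positivity) (by linarith)]
    have := hq_mono r t hr.1 ht.1.le
    simp only [hq] at this hqr
    linarith
  · simp
  · norm_num [hC]

theorem two_mul_arsinh_add_inv_half_le_mul_log (hC₁ : 1 ≤ C) (hC : 2 * arsinh 1 ≤ C * log 3)
    {x : ℝ} (hx : 1 ≤ x) : 2 * arsinh ((x + x⁻¹) / 2) ≤ C * log (x ^ 2 + 2) := by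
  have hderiv : ∀ t ∈ Ici (1 : ℝ), HasDerivAt
      (fun t ↦ C * log (t ^ 2 + 2) - 2 * arsinh ((t + t⁻¹) / 2))
      (C * (2 * t / (t ^ 2 + 2)) - (√(1 + ((t + t⁻¹) / 2) ^ 2))⁻¹ * (1 - (t ^ 2)⁻¹)) t := by
    intro t ht
    have hlog := (((hasDerivAt_pow 2 t).add_const 2).log (by positivity)).const_mul C
    have harsinh := ((((hasDerivAt_id t).add
      (hasDerivAt_inv (zero_lt_one.trans_le ht).ne')).div_const 2).arsinh).const_mul 2
    exact (hlog.sub harsinh).congr_deriv (by simp only [id, smul_eq_mul, Pi.add_apply]; ring)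
  have hmono := (convex_Ici (1 : ℝ)).monotoneOn_of_hasDerivAt_nonneg hderiv ?_
  · have := hmono self_mem_Ici hx hx
    norm_num at this
    linarith
  intro t ht
  rw [interior_Ici] at ht
  have ht0 : 0 < t := zero_lt_one.trans ht
  set y := (t + t⁻¹) / 2 with hy
  have hy0 : 0 < y := by positivity
  have hsqrt : y ≤ √(1 + y ^ 2) := le_sqrt_of_sq_le (by linarith)
  rw [sub_nonneg]
  have h1 : 0 ≤ 1 - (t ^ 2)⁻¹ := sub_nonneg.2 (inv_le_one_of_one_le₀ (one_le_pow₀ ht.le))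
  calc (√(1 + y ^ 2))⁻¹ * (1 - (t ^ 2)⁻¹) ≤ y⁻¹ * (1 - (t ^ 2)⁻¹) := by gcongr
    _ ≤ 2 * t / (t ^ 2 + 2) := by
      rw [hy]
      field_simp
      nlinarith
    _ ≤ C * (2 * t / (t ^ 2 + 2)) := le_mul_of_one_le_left (by positivity) hC₁

end

/-- If k ≥ 1 and 0 ≤ s ≤ k + 1/k then arcosh(1 + s²/2) ≤ (arcosh 3 / log 3) · log(1 + k·s). -/
theorem arcosh_le_const_mul_log (k s : ℝ) (hk : 1 ≤ k) (hs0 : 0 ≤ s) (hs : s ≤ k + 1 / k) :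
    arcosh (1 + s ^ 2 / 2) ≤ (arcosh 3 / Real.log 3) * Real.log (1 + k * s) := by
  set C := arcosh 3 / log 3
  have hlog3 : 0 < log 3 := log_pos (by norm_num)
  have hC₁ : 1 ≤ C := (one_le_div hlog3).2 log_three_le_arcosh_three
  have hC₂ : C ≤ 2 := (div_le_iff₀ hlog3).2 arcosh_three_le_two_mul_log_three
  have hC : 2 * arsinh 1 ≤ C * log 3 := by rw [div_mul_cancel₀ _ hlog3.ne', arcosh_three]
  rw [arcosh_one_add_sq_div_two hs0]
  rcases le_total s 2 with hs2 | hs2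
  · calc 2 * arsinh (s / 2) ≤ C * log (1 + s) :=
          two_mul_arsinh_half_le_mul_log_one_add hC₁ hC₂ hC ⟨hs0, hs2⟩
      _ ≤ C * log (1 + k * s) := by gcongr C * log ?_; nlinarith
  · obtain ⟨x, hx, rfl⟩ := exists_add_inv_eq hk hs2 (by rwa [← one_div])
    have hx0 : x ≠ 0 := (zero_lt_one.trans_le hx.1).ne'
    have hxk : x * (x + x⁻¹) ≤ k * (x + x⁻¹) := by gcongr; exact hx.2
    calc 2 * arsinh ((x + x⁻¹) / 2) ≤ C * log (x ^ 2 + 2) :=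
          two_mul_arsinh_add_inv_half_le_mul_log hC₁ hC hx.1
      _ ≤ C * log (1 + k * (x + x⁻¹)) := by
          gcongr C * log ?_
          rw [mul_add, mul_inv_cancel₀ hx0] at hxk
          nlinarith

end
end

section
/- For every real number s ≥ 2, log(1 + s²/2 + √(s⁴/4 + s²)) ≤ (arcosh 3 / log 3) · log(1 + s²/2 + √(s⁴/4 − s²)), with equality when s = 2. -/
noncomputable section

/-!
With `c = 3 + √8`, so that `log c = arcosh 3`, the two arguments `A(s)` and `B(s)` of the logarithms
satisfy `3 A(s) ≤ c B(s)` for `s ≥ 2`, with equality at `s = 2` where `A = c` and `B = 3`. This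
comes down to `√(s⁴/4 + s²) ≤ √(s⁴/4 − s²) + √8`. Taking logarithms,
`log A ≤ log c − log 3 + log B`, and since `log B ≥ log 3` the additive constant is absorbed into
the factor `log c / log 3 ≥ 1`.
-/

open Real hiding arcosh

theorem log_le_log_div_log_mul_log {a b x y : ℝ} (hx : 0 < x) (hb : 1 < b) (hba : b ≤ a)
    (hby : b ≤ y) (h : b * x ≤ a * y) : log x ≤ log a / log b * log y := by
  have hb0 : 0 < b := by linarith
  have hlogb : 0 < log b := log_pos hb
  have hlogba : log b ≤ log a := log_le_log hb0 hba
  have hlogby : log b ≤ log y := log_le_log hb0 hby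
  have hlog : log b + log x ≤ log a + log y := by
    rw [← log_mul hb0.ne' hx.ne', ← log_mul (by linarith) (by linarith)]
    exact log_le_log (by positivity) h
  rw [div_mul_eq_mul_div, le_div_iff₀ hlogb]
  nlinarith [mul_nonneg (sub_nonneg.2 hlogba) (sub_nonneg.2 hlogby)]

theorem arcosh_three_s11 : arcosh 3 = log (3 + √8) := by
  norm_num [arcosh]

theorem sqrt_quartic_add_le_sqrt_quartic_sub_add {s : ℝ} (hs : 2 ≤ s) :
    √(s ^ 4 / 4 + s ^ 2) ≤ √(s ^ 4 / 4 - s ^ 2) + √8 := by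
  have hs2 : 4 ≤ s ^ 2 := by nlinarith
  have hsub : 0 ≤ s ^ 4 / 4 - s ^ 2 := by nlinarith [mul_nonneg (sq_nonneg s) (sub_nonneg.2 hs2)]
  have hcross : s ^ 2 - 4 ≤ √8 * √(s ^ 4 / 4 - s ^ 2) := by
    rw [← sqrt_mul (by norm_num)]
    exact le_sqrt_of_sq_le (by nlinarith)
  rw [sqrt_le_iff]
  refine ⟨by positivity, ?_⟩
  nlinarith [sq_sqrt hsub, sq_sqrt (show (0 : ℝ) ≤ 8 by norm_num)]

theorem three_le_one_add_sq_div_two_add_sqrt {s : ℝ} (hs : 2 ≤ s) :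
    3 ≤ 1 + s ^ 2 / 2 + √(s ^ 4 / 4 - s ^ 2) := by
  nlinarith [sqrt_nonneg (s ^ 4 / 4 - s ^ 2)]

theorem three_mul_le_three_add_sqrt_eight_mul {s : ℝ} (hs : 2 ≤ s) :
    3 * (1 + s ^ 2 / 2 + √(s ^ 4 / 4 + s ^ 2)) ≤
      (3 + √8) * (1 + s ^ 2 / 2 + √(s ^ 4 / 4 - s ^ 2)) := by
  have hB := three_le_one_add_sq_div_two_add_sqrt hs
  nlinarith [sqrt_quartic_add_le_sqrt_quartic_sub_add hs,
    mul_le_mul_of_nonneg_left hB (sqrt_nonneg 8)]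

/-- For s ≥ 2, log(1 + s²/2 + √(s⁴/4 + s²)) ≤ (arcosh 3 / log 3) · log(1 + s²/2 + √(s⁴/4 − s²)),
with equality when s = 2. -/
theorem endpoint_log_inequality :
    (∀ s : ℝ, 2 ≤ s →
      Real.log (1 + s ^ 2 / 2 + Real.sqrt (s ^ 4 / 4 + s ^ 2)) ≤
        (arcosh 3 / Real.log 3) *
          Real.log (1 + s ^ 2 / 2 + Real.sqrt (s ^ 4 / 4 - s ^ 2))) ∧
    Real.log (1 + (2 : ℝ) ^ 2 / 2 + Real.sqrt ((2 : ℝ) ^ 4 / 4 + (2 : ℝ) ^ 2)) =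
      (arcosh 3 / Real.log 3) *
        Real.log (1 + (2 : ℝ) ^ 2 / 2 + Real.sqrt ((2 : ℝ) ^ 4 / 4 - (2 : ℝ) ^ 2)) := by
  rw [arcosh_three_s11]
  refine ⟨fun s hs => ?_, ?_⟩
  · exact log_le_log_div_log_mul_log (by positivity) (by norm_num)
      (le_add_of_nonneg_right (sqrt_nonneg 8)) (three_le_one_add_sq_div_two_add_sqrt hs)
      (three_mul_le_three_add_sqrt_eight_mul hs)
  · have hlog3 : log 3 ≠ 0 := (log_pos (by norm_num)).ne'
    norm_num [div_mul_cancel₀ _ hlog3]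

end
end

section
/- For every real number s with 0 ≤ s ≤ 2, arcosh(1 + s²/2) ≤ (arcosh 3 / log 2) · log(1 + s/2), with equality at s = 0 and at s = 2. -/
noncomputable section

/-!
With `u = s / 2` the claim reads `arsinh u ≤ (arsinh 1 / log 2) · log (1 + u)` on `[0, 1]`,
because `1 + 2u² = cosh (2 arsinh u)`. In the variable `t = log (1 + u)` the left side is
`g t = arsinh (exp t - 1)`, whose derivative `v / √(1 + (v - 1)²)` with `v = exp t` increases as
long as `v ≤ 2`. So `g` is convex on `(-∞, log 2]`, vanishes at `0`, and lies below its chord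
from `0` to `log 2`, which is the claim.
-/

open Real hiding arcosh
open Set

lemma arcosh_one_add_two_mul_sq {u : ℝ} (hu : 0 ≤ u) :
    arcosh (1 + 2 * u ^ 2) = 2 * arsinh u := by
  have hcosh : 1 + 2 * u ^ 2 = cosh (2 * arsinh u) := by
    rw [cosh_two_mul, cosh_sq', sinh_arsinh]; ring
  rw [hcosh]
  exact Real.arcosh_cosh (mul_nonneg zero_le_two (arsinh_nonneg_iff.2 hu))

lemma monotoneOn_div_sqrt_one_add_sub_one_sq :
    MonotoneOn (fun v : ℝ => v / √(1 + (v - 1) ^ 2)) (Icc 0 2) := by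
  rintro v ⟨hv0, hv2⟩ w ⟨hw0, hw2⟩ hvw
  dsimp only
  rw [div_le_div_iff₀ (by positivity) (by positivity)]
  -- `w²(1 + (v-1)²) - v²(1 + (w-1)²) = 2 (w - v) (1 - (1 - v)(1 - w))`
  have hpoly : v ^ 2 * (1 + (w - 1) ^ 2) ≤ w ^ 2 * (1 + (v - 1) ^ 2) := by
    nlinarith [mul_nonneg (sub_nonneg.2 hvw) (add_nonneg (mul_nonneg (sub_nonneg.2 hv2) hw0)
      (mul_nonneg hv0 (sub_nonneg.2 hw2)))]
  calc v * √(1 + (w - 1) ^ 2) = √(v ^ 2 * (1 + (w - 1) ^ 2)) := by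
        rw [sqrt_mul (sq_nonneg v), sqrt_sq hv0]
    _ ≤ √(w ^ 2 * (1 + (v - 1) ^ 2)) := sqrt_le_sqrt hpoly
    _ = w * √(1 + (v - 1) ^ 2) := by rw [sqrt_mul (sq_nonneg w), sqrt_sq hw0]

lemma hasDerivAt_arsinh_exp_sub_one (t : ℝ) :
    HasDerivAt (fun t => arsinh (exp t - 1)) (exp t / √(1 + (exp t - 1) ^ 2)) t := by
  simpa [div_eq_inv_mul] using ((hasDerivAt_exp t).sub_const 1).arsinh

lemma convexOn_arsinh_exp_sub_one : ConvexOn ℝ (Iic (log 2)) (fun t => arsinh (exp t - 1)) := by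
  have hderiv : deriv (fun t => arsinh (exp t - 1)) =
      (fun v : ℝ => v / √(1 + (v - 1) ^ 2)) ∘ exp :=
    funext fun t => (hasDerivAt_arsinh_exp_sub_one t).deriv
  refine MonotoneOn.convexOn_of_deriv (convex_Iic _)
    (fun t _ => (hasDerivAt_arsinh_exp_sub_one t).continuousAt.continuousWithinAt)
    (fun t _ => (hasDerivAt_arsinh_exp_sub_one t).differentiableAt.differentiableWithinAt) ?_
  rw [interior_Iic, hderiv]
  refine monotoneOn_div_sqrt_one_add_sub_one_sq.comp (exp_monotone.monotoneOn _) fun t ht => ?_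
  exact ⟨(exp_pos t).le, (exp_lt_exp.2 ht).le.trans_eq (exp_log two_pos)⟩

lemma ConvexOn.map_le_div_mul_of_map_zero {s : Set ℝ} {f : ℝ → ℝ} {b t : ℝ}
    (hf : ConvexOn ℝ s f) (h0 : 0 ∈ s) (hb : b ∈ s) (hf0 : f 0 = 0)
    (ht0 : 0 ≤ t) (htb : t ≤ b) :
    f t ≤ f b / b * t := by
  rcases ht0.eq_or_lt with rfl | ht
  · simp [hf0]
  have hsecant := hf.secant_mono h0 (hf.1.ordConnected.out h0 hb ⟨ht0, htb⟩) hb ht.ne'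
    (ht.trans_le htb).ne' htb
  rw [hf0, sub_zero, sub_zero, sub_zero, sub_zero] at hsecant
  exact (div_le_iff₀ ht).1 hsecant

lemma arsinh_le_div_log_two_mul_log_one_add {u : ℝ} (hu0 : 0 ≤ u) (hu1 : u ≤ 1) :
    arsinh u ≤ arsinh 1 / log 2 * log (1 + u) := by
  have hchord := convexOn_arsinh_exp_sub_one.map_le_div_mul_of_map_zero (b := log 2)
    (t := log (1 + u)) (log_pos one_lt_two).le self_mem_Iic (by simp) (log_nonneg (by linarith))
    (log_le_log (by linarith) (by linarith))
  rwa [exp_log (by linarith), exp_log two_pos, add_sub_cancel_left,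
    show (2 : ℝ) - 1 = 1 by norm_num] at hchord

/-- For 0 ≤ s ≤ 2, arcosh(1 + s²/2) ≤ (arcosh 3 / log 2) · log(1 + s/2), with equality at
s = 0 and s = 2. -/
theorem arcosh_le_const_mul_log_half :
    (∀ s : ℝ, 0 ≤ s → s ≤ 2 →
      arcosh (1 + s ^ 2 / 2) ≤ (arcosh 3 / Real.log 2) * Real.log (1 + s / 2)) ∧
    arcosh (1 + (0 : ℝ) ^ 2 / 2) = (arcosh 3 / Real.log 2) * Real.log (1 + (0 : ℝ) / 2) ∧
    arcosh (1 + (2 : ℝ) ^ 2 / 2) = (arcosh 3 / Real.log 2) * Real.log (1 + (2 : ℝ) / 2) := by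
  have arcosh_three : arcosh 3 = 2 * arsinh 1 := by
    rw [show (3 : ℝ) = 1 + 2 * 1 ^ 2 by norm_num]
    exact arcosh_one_add_two_mul_sq zero_le_one
  refine ⟨fun s hs0 hs2 => ?_, by simp [arcosh], ?_⟩
  · rw [show 1 + s ^ 2 / 2 = 1 + 2 * (s / 2) ^ 2 by ring, arcosh_one_add_two_mul_sq (by linarith),
      arcosh_three, mul_div_assoc, mul_assoc]
    exact mul_le_mul_of_nonneg_left
      (arsinh_le_div_log_two_mul_log_one_add (by linarith) (by linarith)) zero_le_two
  · norm_num

end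
end

section
/- Let p ≥ 1 and let s, t, u, v > 0 be real numbers with t^p + u^p ≤ s^p + v^p. Then 1 + ((s + t + st)^p + (u + v + uv)^p)^{1/p} ≤ (1 + (s^p + v^p)^{1/p})². -/
/-!
Write `‖(a, b)‖ₚ = (a ^ p + b ^ p) ^ (1 / p)` and `A = ‖(s, v)‖ₚ`. The hypothesis says
`‖(t, u)‖ₚ ≤ A`, so in particular `t, u ≤ A`. Splitting
`(s + t + s t, u + v + u v) = (t, u) + (s (1 + t), v (1 + u))`, Minkowski's inequality and
`s (1 + t) ≤ (1 + A) s`, `v (1 + u) ≤ (1 + A) v` bound the left-hand norm by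
`A + (1 + A) A`, and `1 + A + (1 + A) A = (1 + A) ^ 2`.
-/

open Real

noncomputable def lpNorm2 (p a b : ℝ) : ℝ := (a ^ p + b ^ p) ^ (1 / p)

section lpNorm2

variable {p a b c d : ℝ}

lemma lpNorm2_add_le (hp : 1 ≤ p) (ha : 0 ≤ a) (hb : 0 ≤ b) (hc : 0 ≤ c) (hd : 0 ≤ d) :
    lpNorm2 p (a + b) (c + d) ≤ lpNorm2 p a c + lpNorm2 p b d := by
  have := Real.Lp_add_le_of_nonneg (s := Finset.univ)
    (f := ![a, c]) (g := ![b, d]) hp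
    (by intro i _; fin_cases i <;> simpa) (by intro i _; fin_cases i <;> simpa)
  simpa [lpNorm2, Fin.sum_univ_two] using this

lemma lpNorm2_le_lpNorm2 (hp : 0 < p) (ha : 0 ≤ a) (hb : 0 ≤ b) (hac : a ≤ c) (hbd : b ≤ d) :
    lpNorm2 p a b ≤ lpNorm2 p c d := by
  unfold lpNorm2
  gcongr

lemma le_lpNorm2_left (hp : 0 < p) (ha : 0 ≤ a) (hb : 0 ≤ b) : a ≤ lpNorm2 p a b :=
  calc a = (a ^ p) ^ (1 / p) := by rw [one_div, rpow_rpow_inv ha hp.ne']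
    _ ≤ lpNorm2 p a b := by unfold lpNorm2; gcongr; exact le_add_of_nonneg_right (by positivity)

lemma le_lpNorm2_right (hp : 0 < p) (ha : 0 ≤ a) (hb : 0 ≤ b) : b ≤ lpNorm2 p a b := by
  rw [lpNorm2, add_comm]
  exact le_lpNorm2_left hp hb ha

lemma lpNorm2_mul (hp : 0 < p) (hc : 0 ≤ c) (ha : 0 ≤ a) (hb : 0 ≤ b) :
    lpNorm2 p (c * a) (c * b) = c * lpNorm2 p a b := by
  rw [lpNorm2, lpNorm2, mul_rpow hc ha, mul_rpow hc hb, ← mul_add,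
    mul_rpow (by positivity) (by positivity), one_div, rpow_rpow_inv hc hp.ne']

end lpNorm2

/-- For p ≥ 1 and s, t, u, v > 0 with t^p + u^p ≤ s^p + v^p:
1 + ((s + t + st)^p + (u + v + uv)^p)^(1/p) ≤ (1 + (s^p + v^p)^(1/p))². -/
theorem central_inequality (p s t u v : ℝ) (hp : 1 ≤ p)
    (hs : 0 < s) (ht : 0 < t) (hu : 0 < u) (hv : 0 < v)
    (h : t ^ p + u ^ p ≤ s ^ p + v ^ p) :
    1 + ((s + t + s * t) ^ p + (u + v + u * v) ^ p) ^ (1 / p) ≤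
      (1 + (s ^ p + v ^ p) ^ (1 / p)) ^ 2 := by
  have hp0 : 0 < p := one_pos.trans_le hp
  change 1 + lpNorm2 p _ _ ≤ (1 + lpNorm2 p s v) ^ 2
  set A := lpNorm2 p s v
  have hA : 0 ≤ A := by unfold A lpNorm2; positivity
  have htu : lpNorm2 p t u ≤ A := by unfold A lpNorm2; gcongr
  have htA : t ≤ A := (le_lpNorm2_left hp0 ht.le hu.le).trans htu
  have huA : u ≤ A := (le_lpNorm2_right hp0 ht.le hu.le).trans htu
  calc 1 + lpNorm2 p (s + t + s * t) (u + v + u * v)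
      = 1 + lpNorm2 p (t + s * (1 + t)) (u + v * (1 + u)) := by ring_nf
    _ ≤ 1 + (lpNorm2 p t u + lpNorm2 p (s * (1 + t)) (v * (1 + u))) := by
        gcongr
        exact lpNorm2_add_le hp ht.le (by positivity) hu.le (by positivity)
    _ ≤ 1 + (A + lpNorm2 p ((1 + A) * s) ((1 + A) * v)) := by
        gcongr
        exact lpNorm2_le_lpNorm2 hp0 (by positivity) (by positivity)
          (by rw [mul_comm]; gcongr) (by rw [mul_comm]; gcongr)
    _ = (1 + A) ^ 2 := by
        rw [lpNorm2_mul hp0 (by positivity) hs.le hv.le]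
        ring
end

section
/- Let p ≥ 1, α > 0, and let a, b be real numbers with 0 ≤ a ≤ α and 0 ≤ b ≤ α. Then (α^p − a^p)^{1/p} + (α^p − b^p)^{1/p} ≤ 2·(α^p − ((a + b)/2)^p)^{1/p}. -/
/-!
The points `(a, (α^p − a^p)^{1/p})` and `(b, (α^p − b^p)^{1/p})` lie on the sphere of radius `α`
of the `ℓ^p` norm on `ℝ²`. By Minkowski's inequality their midpoint lies in the corresponding
closed ball, which says exactly that the second coordinate of the midpoint is at most
`(α^p − ((a + b)/2)^p)^{1/p}`.
-/

open Real Finset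

theorem Lp_add_le_pair_of_nonneg {p a b c d : ℝ} (hp : 1 ≤ p)
    (ha : 0 ≤ a) (hb : 0 ≤ b) (hc : 0 ≤ c) (hd : 0 ≤ d) :
    ((a + b) ^ p + (c + d) ^ p) ^ (1 / p) ≤
      (a ^ p + c ^ p) ^ (1 / p) + (b ^ p + d ^ p) ^ (1 / p) := by
  simpa [Fin.sum_univ_two] using
    Lp_add_le_of_nonneg (s := univ) (f := ![a, c]) (g := ![b, d]) hp
      (by simp [Fin.forall_fin_two, ha, hc]) (by simp [Fin.forall_fin_two, hb, hd])

theorem midpoint_rpow_add_rpow_le {p r a b c d : ℝ} (hp : 1 ≤ p) (hr : 0 ≤ r)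
    (ha : 0 ≤ a) (hb : 0 ≤ b) (hc : 0 ≤ c) (hd : 0 ≤ d)
    (hac : a ^ p + c ^ p ≤ r ^ p) (hbd : b ^ p + d ^ p ≤ r ^ p) :
    ((a + b) / 2) ^ p + ((c + d) / 2) ^ p ≤ r ^ p := by
  have hp0 : 0 < p := zero_lt_one.trans_le hp
  have hnorm {x y : ℝ} (hx : 0 ≤ x) (hy : 0 ≤ y) (hxy : x ^ p + y ^ p ≤ r ^ p) :
      (x ^ p + y ^ p) ^ (1 / p) ≤ r := by
    rw [one_div, rpow_inv_le_iff_of_pos (by positivity) hr hp0]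
    exact hxy
  have hsum : ((a + b) ^ p + (c + d) ^ p) ^ (1 / p) ≤ 2 * r := by
    linarith [Lp_add_le_pair_of_nonneg hp ha hb hc hd, hnorm ha hc hac, hnorm hb hd hbd]
  rw [one_div, rpow_inv_le_iff_of_pos (by positivity) (by positivity) hp0,
    mul_rpow zero_le_two hr] at hsum
  rw [div_rpow (by positivity) zero_le_two, div_rpow (by positivity) zero_le_two, ← add_div,
    div_le_iff₀ (by positivity)]
  linarith

theorem rpow_add_rpow_rpow_sub_rpow_one_div {p a α : ℝ} (hp : 0 < p) (ha : 0 ≤ a)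
    (haα : a ≤ α) :
    a ^ p + ((α ^ p - a ^ p) ^ (1 / p)) ^ p = α ^ p := by
  rw [one_div, rpow_inv_rpow (sub_nonneg.2 (rpow_le_rpow ha haα hp.le)) hp.ne']
  ring

theorem midpoint_concavity_general (p α a b : ℝ) (hp : 1 ≤ p)
    (ha0 : 0 ≤ a) (haα : a ≤ α) (hb0 : 0 ≤ b) (hbα : b ≤ α) :
    (α ^ p - a ^ p) ^ (1 / p) + (α ^ p - b ^ p) ^ (1 / p) ≤
      2 * (α ^ p - ((a + b) / 2) ^ p) ^ (1 / p) := by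
  have hp0 : 0 < p := zero_lt_one.trans_le hp
  set A := (α ^ p - a ^ p) ^ (1 / p)
  set B := (α ^ p - b ^ p) ^ (1 / p)
  have hA0 : 0 ≤ A := rpow_nonneg (sub_nonneg.2 (rpow_le_rpow ha0 haα hp0.le)) _
  have hB0 : 0 ≤ B := rpow_nonneg (sub_nonneg.2 (rpow_le_rpow hb0 hbα hp0.le)) _
  have hmid : ((a + b) / 2) ^ p + ((A + B) / 2) ^ p ≤ α ^ p :=
    midpoint_rpow_add_rpow_le hp (ha0.trans haα) ha0 hb0 hA0 hB0
      (rpow_add_rpow_rpow_sub_rpow_one_div hp0 ha0 haα).le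
      (rpow_add_rpow_rpow_sub_rpow_one_div hp0 hb0 hbα).le
  have hAB : (A + B) / 2 ≤ (α ^ p - ((a + b) / 2) ^ p) ^ (1 / p) := by
    have hpow : 0 ≤ ((A + B) / 2) ^ p := by positivity
    rw [one_div, le_rpow_inv_iff_of_pos (by positivity) (by linarith) hp0]
    linarith
  linarith

/-- Midpoint concavity of s ↦ (α^p − s^p)^(1/p) on [0, α] for p ≥ 1:
(α^p − a^p)^(1/p) + (α^p − b^p)^(1/p) ≤ 2·(α^p − ((a + b)/2)^p)^(1/p). -/
theorem midpoint_concavity (p α a b : ℝ) (hp : 1 ≤ p) (hα : 0 < α)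
    (ha0 : 0 ≤ a) (haα : a ≤ α) (hb0 : 0 ≤ b) (hbα : b ≤ α) :
    (α ^ p - a ^ p) ^ (1 / p) + (α ^ p - b ^ p) ^ (1 / p) ≤
      2 * (α ^ p - ((a + b) / 2) ^ p) ^ (1 / p) :=
  midpoint_concavity_general p α a b hp ha0 haα hb0 hbα
end

section
/- Let G = ℝ̄ⁿ \ {0, ∞} (i.e. ℝⁿ \ {0} viewed as a domain in ℝ̄ⁿ, with boundary ∂G = {0, ∞}), and let e₁ be the first standard basis vector of ℝⁿ. Then ρ_G(e₁, −e₁) = arcosh 3 and δ_G(e₁, −e₁) = log 3; in particular ρ_G(e₁,−e₁) = (arcosh 3 / log 3) · δ_G(e₁,−e₁), so the constant arcosh 3 / log 3 in the inequality ρ_G ≤ (arcosh 3/log 3)·δ_G is sharp. -/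
open OnePoint

noncomputable section

/-! For `G = ℝ̄ⁿ \ {0, ∞}` only four boundary pairs enter the suprema. Against `0` and `∞` all
chordal normalisations cancel, so `|0,x,∞,y| = |x - y|/|x|` and `|∞,x,0,y| = |x - y|/|y|`, while
a repeated boundary point gives cross-ratio `0`. For `x = e₁`, `y = -e₁` both ratios equal `2`,
whence `ρ_G = arcosh (1 + 2·2/2) = arcosh 3` and `δ_G = log (1 + 2) = log 3`. -/

theorem Set.Finite.frontier_compl_eq {X : Type*} [TopologicalSpace X] [T1Space X]
    [∀ x : X, Filter.NeBot (nhdsWithin x {x}ᶜ)] {s : Set X} (hs : s.Finite) :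
    frontier sᶜ = s := by
  have hdense : Dense sᶜ := by simpa [← Set.compl_eq_univ_sdiff] using dense_univ.sdiff_finite hs
  rw [frontier_compl, hs.isClosed.frontier_eq, interior_eq_empty_iff_dense_compl.2 hdense,
    Set.sdiff_empty]

theorem sSup_setOf_exists_mem_mem_eq {α : Type*} {s : Set α} {f : α → α → ℝ} {m : ℝ}
    (hm : ∃ a ∈ s, ∃ b ∈ s, f a b = m) (hle : ∀ a ∈ s, ∀ b ∈ s, f a b ≤ m) :
    sSup {r : ℝ | ∃ a ∈ s, ∃ b ∈ s, r = f a b} = m := by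
  refine IsGreatest.csSup_eq ⟨?_, ?_⟩
  · obtain ⟨a, ha, b, hb, rfl⟩ := hm
    exact ⟨a, ha, b, hb, rfl⟩
  · rintro r ⟨a, ha, b, hb, rfl⟩
    exact hle a ha b hb

theorem arcosh_one : arcosh 1 = 0 := by
  simp [arcosh]

theorem arcosh_nonneg_s19 {t : ℝ} (ht : 1 ≤ t) : 0 ≤ arcosh t :=
  Real.log_nonneg (by linarith [Real.sqrt_nonneg (t ^ 2 - 1)])

section CrossRatio

variable {n : ℕ}

theorem chordal_self (a : OnePoint (En n)) : chordal a a = 0 := by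
  induction a using OnePoint.rec <;> simp [chordal]

theorem crossRatio_self_self (a x y : OnePoint (En n)) : crossRatio a x a y = 0 := by
  simp [crossRatio, chordal_self]

theorem crossRatio_zero_infty (x y : En n) :
    crossRatio ((0 : En n) : OnePoint (En n)) x ∞ y = ‖x - y‖ / ‖x‖ := by
  set A := Real.sqrt (1 + ‖x‖ ^ 2)
  set B := Real.sqrt (1 + ‖y‖ ^ 2)
  have hAB : A * B ≠ 0 := by positivity
  calc crossRatio ((0 : En n) : OnePoint (En n)) x ∞ y
      = ‖x - y‖ / (A * B) / (‖x‖ / (A * B)) := by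
        simp only [crossRatio, chordal, zero_sub, norm_neg, norm_zero]
        norm_num
        ring
    _ = ‖x - y‖ / ‖x‖ := div_div_div_cancel_right₀ hAB _ _

theorem crossRatio_infty_zero (x y : En n) :
    crossRatio ∞ x ((0 : En n) : OnePoint (En n)) y = ‖x - y‖ / ‖y‖ := by
  set A := Real.sqrt (1 + ‖x‖ ^ 2)
  set B := Real.sqrt (1 + ‖y‖ ^ 2)
  have hAB : A * B ≠ 0 := by positivity
  calc crossRatio ∞ x ((0 : En n) : OnePoint (En n)) y
      = ‖x - y‖ / (A * B) / (‖y‖ / (A * B)) := by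
        simp only [crossRatio, chordal, zero_sub, norm_neg, norm_zero]
        norm_num
        ring
    _ = ‖x - y‖ / ‖y‖ := div_div_div_cancel_right₀ hAB _ _

end CrossRatio

section PuncturedSpace

variable {n : ℕ} {G : Set (OnePoint (En n))}

theorem rho_eq_of_frontier_eq (hG : frontier G = {((0 : En n) : OnePoint (En n)), ∞})
    (x y : En n) :
    rho G x y = arcosh (1 + ‖x - y‖ ^ 2 / (2 * (‖x‖ * ‖y‖))) := by
  have hoff : ‖x - y‖ / ‖x‖ * (‖x - y‖ / ‖y‖) / 2 = ‖x - y‖ ^ 2 / (2 * (‖x‖ * ‖y‖)) := by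
    ring
  have hdiag : arcosh (1 + 0 * 0 / 2) ≤ arcosh (1 + ‖x - y‖ ^ 2 / (2 * (‖x‖ * ‖y‖))) := by
    simpa [arcosh_one] using arcosh_nonneg_s19 (le_add_of_nonneg_right (by positivity))
  rw [rho, hG]
  refine sSup_setOf_exists_mem_mem_eq ⟨_, Or.inl rfl, ∞, Or.inr rfl, ?_⟩ ?_
  · rw [crossRatio_zero_infty, crossRatio_zero_infty, norm_sub_rev y x, hoff]
  · rintro a (rfl | rfl) b (rfl | rfl)
    · simpa only [crossRatio_self_self] using hdiag
    · rw [crossRatio_zero_infty, crossRatio_zero_infty, norm_sub_rev y x, hoff]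
    · rw [crossRatio_infty_zero, crossRatio_infty_zero, norm_sub_rev y x, mul_comm, hoff]
    · simpa only [crossRatio_self_self] using hdiag

theorem seittenranta_eq_of_frontier_eq (hG : frontier G = {((0 : En n) : OnePoint (En n)), ∞})
    (x y : En n) :
    seittenranta G x y = Real.log (1 + max (‖x - y‖ / ‖x‖) (‖x - y‖ / ‖y‖)) := by
  have hmono {t : ℝ} (ht₀ : 0 ≤ t) (ht : t ≤ max (‖x - y‖ / ‖x‖) (‖x - y‖ / ‖y‖)) :
      Real.log (1 + t) ≤ Real.log (1 + max (‖x - y‖ / ‖x‖) (‖x - y‖ / ‖y‖)) :=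
    Real.log_le_log (by linarith) (by linarith)
  have hdiag := hmono le_rfl (by positivity)
  rw [seittenranta, hG]
  refine sSup_setOf_exists_mem_mem_eq ?_ ?_
  · rcases max_choice (‖x - y‖ / ‖x‖) (‖x - y‖ / ‖y‖) with h | h <;> rw [h]
    · exact ⟨_, Or.inl rfl, ∞, Or.inr rfl, by rw [crossRatio_zero_infty]⟩
    · exact ⟨∞, Or.inr rfl, _, Or.inl rfl, by rw [crossRatio_infty_zero]⟩
  · rintro a (rfl | rfl) b (rfl | rfl)
    · simpa only [crossRatio_self_self] using hdiag
    · rw [crossRatio_zero_infty]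
      exact hmono (by positivity) (le_max_left _ _)
    · rw [crossRatio_infty_zero]
      exact hmono (by positivity) (le_max_right _ _)
    · simpa only [crossRatio_self_self] using hdiag

end PuncturedSpace

/-- Sharpness of the constant arcosh 3 / log 3: for G = ℝ̄ⁿ \ {0, ∞} (so ∂G = {0, ∞}) and
e₁ the first standard basis vector, ρ_G(e₁, −e₁) = arcosh 3, δ_G(e₁, −e₁) = log 3, and
hence ρ_G(e₁, −e₁) = (arcosh 3 / log 3) · δ_G(e₁, −e₁). -/
theorem rho_seittenranta_sharp (n : ℕ) (hn : 2 ≤ n)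
    (G : Set (OnePoint (En n)))
    (hG : G = ({((0 : En n) : OnePoint (En n)), (∞ : OnePoint (En n))} : Set (OnePoint (En n)))ᶜ)
    (e₁ : En n) (he₁ : e₁ = EuclideanSpace.single (⟨0, by omega⟩ : Fin n) (1 : ℝ)) :
    rho G (e₁ : OnePoint (En n)) ((-e₁ : En n) : OnePoint (En n)) = arcosh 3 ∧
    seittenranta G (e₁ : OnePoint (En n)) ((-e₁ : En n) : OnePoint (En n)) = Real.log 3 ∧
    rho G (e₁ : OnePoint (En n)) ((-e₁ : En n) : OnePoint (En n)) =
      (arcosh 3 / Real.log 3) *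
        seittenranta G (e₁ : OnePoint (En n)) ((-e₁ : En n) : OnePoint (En n)) := by
  have hnorm : ‖e₁‖ = 1 := by simp [he₁]
  have hdist : ‖e₁ - -e₁‖ = 2 := by
    rw [sub_neg_eq_add, ← two_smul ℝ e₁, norm_smul, hnorm]; norm_num
  -- so that no point of `ℝ̄ⁿ` is isolated, which `frontier_compl_eq` needs
  have : Nontrivial (En n) := nontrivial_of_ne e₁ 0 (norm_ne_zero_iff.1 (by simp [hnorm]))
  have hfr : frontier G = {((0 : En n) : OnePoint (En n)), ∞} :=
    hG ▸ (Set.toFinite _).frontier_compl_eq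
  have hρ : rho G e₁ (-e₁ : En n) = arcosh 3 := by
    rw [rho_eq_of_frontier_eq hfr, hdist, norm_neg, hnorm]; norm_num
  have hδ : seittenranta G e₁ (-e₁ : En n) = Real.log 3 := by
    rw [seittenranta_eq_of_frontier_eq hfr, hdist, norm_neg, hnorm]; norm_num
  refine ⟨hρ, hδ, ?_⟩
  rw [hρ, hδ, div_mul_cancel₀ _ (Real.log_pos (by norm_num)).ne']

end
end
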